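/- arXiv:math/0309287 — 4 statements merged into one kernel-verified Lean document; each statement's English description precedes it below -/
import Mathlib

section
/- For any symmetric trace-free 4×4 real matrix E, tr(E³) ≥ -(1/√3)·|E|³, where |E|² = Σᵢⱼ Eᵢⱼ². -/
/-!
Diagonalising `E`, both sides become power sums of its eigenvalues `a, b, c, d`, which add up to
zero. Eliminating `d`, with `x = a + b`, `y = b + c`, `z = c + a` one has
`a² + b² + c² + d² = x² + y² + z²` and `a³ + b³ + c³ + d³ = -3xyz`, so `3 (∑ λ³)² ≤ (∑ λ²)³` is
AM-GM for `x², y², z²`.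
-/

open Matrix

namespace Matrix

theorem IsHermitian.trace_pow_eq_sum_eigenvalues_pow {𝕜 n : Type*} [RCLike 𝕜] [Fintype n]
    [DecidableEq n] {A : Matrix n n 𝕜} (hA : A.IsHermitian) (k : ℕ) :
    (A ^ k).trace = ∑ i, (hA.eigenvalues i : 𝕜) ^ k := by
  conv_lhs => rw [hA.spectral_theorem, ← map_pow, Unitary.conjStarAlgAut_apply, trace_mul_cycle,
    Unitary.coe_star_mul_self, one_mul, diagonal_pow, trace_diagonal]
  rfl

theorem IsSymm.trace_sq_eq_sum_sq {R n : Type*} [Semiring R] [Fintype n] [DecidableEq n]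
    {A : Matrix n n R} (hA : A.IsSymm) : (A ^ 2).trace = ∑ i, ∑ j, A i j ^ 2 := by
  simp only [sq, trace, diag, mul_apply, hA.apply]

end Matrix

theorem twenty_seven_mul_mul_mul_le_add_add_pow_three {u v w : ℝ} (hu : 0 ≤ u) (hv : 0 ≤ v)
    (hw : 0 ≤ w) : 27 * (u * v * w) ≤ (u + v + w) ^ 3 := by
  nlinarith [sq_nonneg (u - v), sq_nonneg (v - w), sq_nonneg (u - w), mul_nonneg hu hv,
    mul_nonneg hv hw, mul_nonneg hu hw]

theorem three_mul_sum_cube_sq_le_sum_sq_cube {a b c d : ℝ} (h : a + b + c + d = 0) :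
    3 * (a ^ 3 + b ^ 3 + c ^ 3 + d ^ 3) ^ 2 ≤ (a ^ 2 + b ^ 2 + c ^ 2 + d ^ 2) ^ 3 := by
  obtain rfl : d = -(a + b + c) := by linarith
  have hcubes : a ^ 3 + b ^ 3 + c ^ 3 + (-(a + b + c)) ^ 3 =
      -3 * ((a + b) * (b + c) * (c + a)) := by
    ring
  have hsquares : a ^ 2 + b ^ 2 + c ^ 2 + (-(a + b + c)) ^ 2 =
      (a + b) ^ 2 + (b + c) ^ 2 + (c + a) ^ 2 := by
    ring
  have hamgm := twenty_seven_mul_mul_mul_le_add_add_pow_three (sq_nonneg (a + b))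
    (sq_nonneg (b + c)) (sq_nonneg (c + a))
  rw [hcubes, hsquares]
  linarith

theorem neg_le_of_three_mul_sq_le_cube {t s : ℝ} (hs : 0 ≤ s) (h : 3 * t ^ 2 ≤ s ^ 3) :
    -(1 / √3) * √s ^ 3 ≤ t := by
  have h3 : (0 : ℝ) < √3 := by positivity
  have habs : √3 * |t| ≤ √s ^ 3 := by
    refine (pow_le_pow_iff_left₀ (by positivity) (by positivity) two_ne_zero).mp ?_
    calc (√3 * |t|) ^ 2 = 3 * t ^ 2 := by rw [mul_pow, Real.sq_sqrt zero_le_three, sq_abs]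
      _ ≤ s ^ 3 := h
      _ = (√s ^ 3) ^ 2 := by rw [← pow_mul, mul_comm, pow_mul, Real.sq_sqrt hs]
  rw [neg_mul, one_div_mul_eq_div, neg_le, le_div_iff₀' h3]
  exact (mul_le_mul_of_nonneg_left (neg_le_abs t) h3.le).trans habs

theorem trace_cube_ge_neg_norm_cubed
    (E : Matrix (Fin 4) (Fin 4) ℝ) (hE : E.IsSymm)
    (htr : E.trace = 0) :
    (E ^ 3).trace ≥
      -(1 / Real.sqrt 3) * (Real.sqrt (∑ i, ∑ j, (E i j) ^ 2)) ^ 3 := by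
  have hE' : E.IsHermitian := isHermitian_iff_isSymm.mpr hE
  have hsum := hE'.trace_pow_eq_sum_eigenvalues_pow 1
  rw [pow_one, htr] at hsum
  rw [← hE.trace_sq_eq_sum_sq, hE'.trace_pow_eq_sum_eigenvalues_pow,
    hE'.trace_pow_eq_sum_eigenvalues_pow]
  simp only [Fin.sum_univ_four, pow_one, RCLike.ofReal_real_eq_id, id] at hsum ⊢
  exact neg_le_of_three_mul_sq_le_cube (by positivity)
    (three_mul_sum_cube_sq_le_sum_sq_cube hsum.symm)
end

section
/- Define J(X,Y) = 3√6·(|X|²+|Y|²)^{3/2} - 54·x₁x₂x₃ - 54·y₁y₂y₃ for vectors X=(x₁,x₂,x₃), Y=(y₁,y₂,y₃) in ℝ³ with x₁+x₂+x₃ = 0 and y₁+y₂+y₃ = 0. Then J(X,Y) ≥ 0. -/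
lemma cube_sq (x₁ x₂ x₃ : ℝ) (h : x₁ + x₂ + x₃ = 0) :
    54 * (x₁*x₂*x₃)^2 ≤ (x₁^2+x₂^2+x₃^2)^3 := by
  have h3 : x₃ = -(x₁+x₂) := by linarith
  subst h3
  nlinarith [sq_nonneg ((x₁-x₂)*(2*x₁+x₂)*(x₁+2*x₂)), sq_nonneg (x₁-x₂), sq_nonneg (x₁+x₂), sq_nonneg (x₁*x₂)]

lemma part_bound (x₁ x₂ x₃ S : ℝ) (h : x₁ + x₂ + x₃ = 0)
    (hS : x₁^2+x₂^2+x₃^2 ≤ S) :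
    54 * (x₁*x₂*x₃) ≤ 3 * Real.sqrt 6 * ((x₁^2+x₂^2+x₃^2) * Real.sqrt S) := by
  set sx := x₁^2+x₂^2+x₃^2 with hsx
  have hsx0 : 0 ≤ sx := by positivity
  have hS0 : 0 ≤ S := le_trans hsx0 hS
  have hs : Real.sqrt S ^ 2 = S := Real.sq_sqrt hS0
  have h6 : Real.sqrt 6 ^ 2 = 6 := Real.sq_sqrt (by norm_num)
  have hc := cube_sq x₁ x₂ x₃ h
  rw [← hsx] at hc
  set A := 3 * Real.sqrt 6 * (sx * Real.sqrt S) with hA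
  have hA0 : 0 ≤ A := by positivity
  rcases le_or_gt (x₁*x₂*x₃) 0 with hp | hp
  · linarith
  · have hA2 : A^2 = 54 * sx^2 * S := by
      have : A^2 = 9 * Real.sqrt 6 ^ 2 * sx^2 * Real.sqrt S ^ 2 := by ring
      rw [h6, hs] at this; linarith
    have hsq : (54 * (x₁*x₂*x₃))^2 ≤ A^2 := by
      rw [hA2]
      nlinarith [mul_le_mul_of_nonneg_left hS (sq_nonneg sx)]
    calc 54 * (x₁*x₂*x₃) = Real.sqrt ((54 * (x₁*x₂*x₃))^2) := (Real.sqrt_sq (by positivity)).symm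
      _ ≤ Real.sqrt (A^2) := Real.sqrt_le_sqrt hsq
      _ = A := Real.sqrt_sq hA0

theorem J_nonneg (x₁ x₂ x₃ y₁ y₂ y₃ : ℝ)
    (hx : x₁ + x₂ + x₃ = 0) (hy : y₁ + y₂ + y₃ = 0) :
    3 * Real.sqrt 6 *
        ((x₁ ^ 2 + x₂ ^ 2 + x₃ ^ 2 + y₁ ^ 2 + y₂ ^ 2 + y₃ ^ 2) *
          Real.sqrt (x₁ ^ 2 + x₂ ^ 2 + x₃ ^ 2 + y₁ ^ 2 + y₂ ^ 2 + y₃ ^ 2))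
      - 54 * (x₁ * x₂ * x₃) - 54 * (y₁ * y₂ * y₃) ≥ 0 := by
  set S := x₁ ^ 2 + x₂ ^ 2 + x₃ ^ 2 + y₁ ^ 2 + y₂ ^ 2 + y₃ ^ 2 with hS
  have h1 := part_bound x₁ x₂ x₃ S hx (by nlinarith [sq_nonneg y₁, sq_nonneg y₂, sq_nonneg y₃])
  have h2 := part_bound y₁ y₂ y₃ S hy (by nlinarith [sq_nonneg x₁, sq_nonneg x₂, sq_nonneg x₃])
  have key : 3 * Real.sqrt 6 * ((x₁^2+x₂^2+x₃^2) * Real.sqrt S)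
      + 3 * Real.sqrt 6 * ((y₁^2+y₂^2+y₃^2) * Real.sqrt S)
      = 3 * Real.sqrt 6 * (S * Real.sqrt S) := by rw [hS]; ring
  linarith
end

section
/- Define J(X,Y) = 3√6·(|X|²+|Y|²)^{3/2} - 54·x₁x₂x₃ - 54·y₁y₂y₃ for X,Y ∈ ℝ³ with x₁+x₂+x₃ = 0 = y₁+y₂+y₃. If J(X,Y) = 0 then either X = Y = 0, or Y = 0 and X is a permutation of (-a,-a,2a) for some a ≠ 0, or X = 0 and Y is a permutation of (-a,-a,2a) for some a ≠ 0. -/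
set_option maxHeartbeats 800000

-- cubic discriminant identity
lemma cubid (a b c : ℝ) (h : a + b + c = 0) :
    (a^2+b^2+c^2)^3 - 54*(a*b*c)^2 = 2*((a-b)*(b-c)*(a-c))^2 := by
  have hc : c = -a - b := by linarith
  subst hc; ring

-- single vector classification
lemma single (y₁ y₂ y₃ : ℝ) (hy : y₁ + y₂ + y₃ = 0)
    (hnz : ¬(y₁ = 0 ∧ y₂ = 0 ∧ y₃ = 0))
    (h : (y₁^2+y₂^2+y₃^2)^3 = 54*(y₁*y₂*y₃)^2) :
    ∃ a : ℝ, a ≠ 0 ∧ ({y₁, y₂, y₃} : Multiset ℝ) = {-a, -a, 2 * a} := by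
  have hid := cubid y₁ y₂ y₃ hy
  have hD : (y₁-y₂)*(y₂-y₃)*(y₁-y₃) = 0 := by nlinarith [sq_nonneg ((y₁-y₂)*(y₂-y₃)*(y₁-y₃))]
  rcases mul_eq_zero.1 hD with hD | h13
  · rcases mul_eq_zero.1 hD with h12 | h23
    · -- y₁ = y₂
      have e12 : y₂ = y₁ := by linarith
      have e3 : y₃ = -2*y₁ := by linarith
      refine ⟨-y₁, ?_, ?_⟩
      · intro ha
        apply hnz
        have : y₁ = 0 := by linarith [neg_eq_zero.1 ha]
        refine ⟨this, by linarith, by linarith⟩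
      · rw [e12, e3]
        norm_num
    · -- y₂ = y₃
      have e23 : y₃ = y₂ := by linarith
      have e1 : y₁ = -2*y₂ := by linarith
      refine ⟨-y₂, ?_, ?_⟩
      · intro ha
        apply hnz
        have : y₂ = 0 := by linarith [neg_eq_zero.1 ha]
        refine ⟨by linarith, this, by linarith⟩
      · rw [e23, e1]
        norm_num
        show -(2*y₂) ::ₘ y₂ ::ₘ y₂ ::ₘ 0 = y₂ ::ₘ y₂ ::ₘ -(2*y₂) ::ₘ 0
        rw [Multiset.cons_swap]
        congr 1
        exact Multiset.cons_swap _ _ _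
  · -- y₁ = y₃
    have e13 : y₃ = y₁ := by linarith
    have e2 : y₂ = -2*y₁ := by linarith
    refine ⟨-y₁, ?_, ?_⟩
    · intro ha
      apply hnz
      have : y₁ = 0 := by linarith [neg_eq_zero.1 ha]
      refine ⟨this, by linarith, by linarith⟩
    · rw [e13, e2]
      norm_num
      show -(2*y₁) ::ₘ y₁ ::ₘ 0 = y₁ ::ₘ -(2*y₁) ::ₘ 0
      exact Multiset.cons_swap _ _ _

lemma sqzero (a b c : ℝ) (h : a^2+b^2+c^2 = 0) : a = 0 ∧ b = 0 ∧ c = 0 := by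
  refine ⟨?_, ?_, ?_⟩ <;> nlinarith [sq_nonneg a, sq_nonneg b, sq_nonneg c]

lemma key_ineq (sx sy px py : ℝ) (hsx0 : 0 ≤ sx) (hsy0 : 0 ≤ sy)
    (hDx : 0 ≤ sx ^ 3 - 54 * px ^ 2) (hDy : 0 ≤ sy ^ 3 - 54 * py ^ 2)
    (hsq : 54 * (sx + sy) ^ 3 = (54 * px + 54 * py) ^ 2) : sx = 0 ∨ sy = 0 := by
  by_contra hc
  push_neg at hc
  have hsxp : 0 < sx := lt_of_le_of_ne hsx0 (Ne.symm hc.1)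
  have hsyp : 0 < sy := lt_of_le_of_ne hsy0 (Ne.symm hc.2)
  have h1 : 3 * sx * sy * (sx + sy) ≤ 108 * px * py := by nlinarith [hsq, hDx, hDy]
  have h2 : 0 < 3 * sx * sy * (sx + sy) := by positivity
  have h3 : (108 * px * py) ^ 2 ≤ 4 * sx ^ 3 * sy ^ 3 := by
    nlinarith [mul_nonneg hDx hDy, mul_nonneg (sq_nonneg px) hDy, mul_nonneg (sq_nonneg py) hDx]
  have h4 : 36 * sx ^ 3 * sy ^ 3 ≤ (3 * sx * sy * (sx + sy)) ^ 2 := by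
    nlinarith [mul_nonneg (sq_nonneg (sx - sy)) (sq_nonneg (sx * sy))]
  have h5 : (3 * sx * sy * (sx + sy)) ^ 2 ≤ (108 * px * py) ^ 2 :=
    pow_le_pow_left₀ h2.le h1 2
  nlinarith [mul_pos (pow_pos hsxp 3) (pow_pos hsyp 3)]

theorem J_eq_zero_classification (x₁ x₂ x₃ y₁ y₂ y₃ : ℝ)
    (hx : x₁ + x₂ + x₃ = 0) (hy : y₁ + y₂ + y₃ = 0)
    (hJ : 3 * Real.sqrt 6 *
        ((x₁ ^ 2 + x₂ ^ 2 + x₃ ^ 2 + y₁ ^ 2 + y₂ ^ 2 + y₃ ^ 2) *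
          Real.sqrt (x₁ ^ 2 + x₂ ^ 2 + x₃ ^ 2 + y₁ ^ 2 + y₂ ^ 2 + y₃ ^ 2))
      - 54 * (x₁ * x₂ * x₃) - 54 * (y₁ * y₂ * y₃) = 0) :
    (x₁ = 0 ∧ x₂ = 0 ∧ x₃ = 0 ∧ y₁ = 0 ∧ y₂ = 0 ∧ y₃ = 0) ∨
    (y₁ = 0 ∧ y₂ = 0 ∧ y₃ = 0 ∧
      ∃ a : ℝ, a ≠ 0 ∧ ({x₁, x₂, x₃} : Multiset ℝ) = {-a, -a, 2 * a}) ∨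
    (x₁ = 0 ∧ x₂ = 0 ∧ x₃ = 0 ∧
      ∃ a : ℝ, a ≠ 0 ∧ ({y₁, y₂, y₃} : Multiset ℝ) = {-a, -a, 2 * a}) := by
  obtain ⟨S, hS⟩ : ∃ S : ℝ, S = x₁ ^ 2 + x₂ ^ 2 + x₃ ^ 2 + y₁ ^ 2 + y₂ ^ 2 + y₃ ^ 2 := ⟨_, rfl⟩
  obtain ⟨sx, hsx⟩ : ∃ s : ℝ, s = x₁ ^ 2 + x₂ ^ 2 + x₃ ^ 2 := ⟨_, rfl⟩
  obtain ⟨sy, hsy⟩ : ∃ s : ℝ, s = y₁ ^ 2 + y₂ ^ 2 + y₃ ^ 2 := ⟨_, rfl⟩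
  obtain ⟨px, hpx⟩ : ∃ p : ℝ, p = x₁ * x₂ * x₃ := ⟨_, rfl⟩
  obtain ⟨py, hpy⟩ : ∃ p : ℝ, p = y₁ * y₂ * y₃ := ⟨_, rfl⟩
  rw [← hS, ← hpx, ← hpy] at hJ
  have hS0 : 0 ≤ S := by rw [hS]; positivity
  have hr : Real.sqrt S ^ 2 = S := Real.sq_sqrt hS0
  have h6 : Real.sqrt 6 ^ 2 = 6 := Real.sq_sqrt (by norm_num)
  have heq : 3 * Real.sqrt 6 * (S * Real.sqrt S) = 54 * px + 54 * py := by linarith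
  have hsq : 54 * S ^ 3 = (54 * px + 54 * py) ^ 2 := by
    have h2 : (3 * Real.sqrt 6 * (S * Real.sqrt S)) ^ 2
        = 9 * (Real.sqrt 6 ^ 2) * S ^ 2 * (Real.sqrt S ^ 2) := by ring
    rw [h6, hr] at h2
    rw [← heq]; linarith [h2]
  have hSsum : S = sx + sy := by rw [hS, hsx, hsy]; ring
  have hsx0 : 0 ≤ sx := by rw [hsx]; positivity
  have hsy0 : 0 ≤ sy := by rw [hsy]; positivity
  have hDx : 0 ≤ sx ^ 3 - 54 * px ^ 2 := by
    rw [hsx, hpx, cubid x₁ x₂ x₃ hx]; positivity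
  have hDy : 0 ≤ sy ^ 3 - 54 * py ^ 2 := by
    rw [hsy, hpy, cubid y₁ y₂ y₃ hy]; positivity
  have hsq' : 54 * (sx + sy) ^ 3 = (54 * px + 54 * py) ^ 2 := by rw [← hSsum]; linarith
  have hkey : sx = 0 ∨ sy = 0 := key_ineq sx sy px py hsx0 hsy0 hDx hDy hsq'
  rcases hkey with h | h
  · -- X = 0
    obtain ⟨hx1, hx2, hx3⟩ := sqzero x₁ x₂ x₃ (by rw [← hsx]; exact h)
    have hpx0 : px = 0 := by rw [hpx, hx1]; ring
    have hsyeq : sy ^ 3 = 54 * py ^ 2 := by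
      rw [h, hpx0] at hsq'; nlinarith [hsq']
    by_cases hz : y₁ = 0 ∧ y₂ = 0 ∧ y₃ = 0
    · exact Or.inl ⟨hx1, hx2, hx3, hz.1, hz.2.1, hz.2.2⟩
    · refine Or.inr (Or.inr ⟨hx1, hx2, hx3, single y₁ y₂ y₃ hy hz ?_⟩)
      rw [← hsy, ← hpy]; exact hsyeq
  · -- Y = 0
    obtain ⟨hy1, hy2, hy3⟩ := sqzero y₁ y₂ y₃ (by rw [← hsy]; exact h)
    have hpy0 : py = 0 := by rw [hpy, hy1]; ring
    have hsxeq : sx ^ 3 = 54 * px ^ 2 := by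
      rw [h, hpy0] at hsq'; nlinarith [hsq']
    by_cases hz : x₁ = 0 ∧ x₂ = 0 ∧ x₃ = 0
    · exact Or.inl ⟨hz.1, hz.2.1, hz.2.2, hy1, hy2, hy3⟩
    · refine Or.inr (Or.inl ⟨hy1, hy2, hy3, single x₁ x₂ x₃ hx hz ?_⟩)
      rw [← hsx, ← hpx]; exact hsxeq
end

section
/- For real a > 0 and s satisfying 36a + 9s = √6 and 6(s² + a²) = 1, one has (s² + 2a²)/√6 - (4a³ - s³) > 0. -/
theorem step4_positivity (a s : ℝ) (ha : 0 < a)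
    (h1 : 36 * a + 9 * s = Real.sqrt 6)
    (h2 : 6 * (s ^ 2 + a ^ 2) = 1) :
    (s ^ 2 + 2 * a ^ 2) / Real.sqrt 6 - (4 * a ^ 3 - s ^ 3) > 0 := by
  have ht : Real.sqrt 6 ^ 2 = 6 := Real.sq_sqrt (by norm_num)
  have htpos : (0:ℝ) < Real.sqrt 6 := Real.sqrt_pos.mpr (by norm_num)
  have htub : Real.sqrt 6 < 2.45 := by nlinarith [ht, htpos]
  set t := Real.sqrt 6 with hdef
  have hs : s = t/9 - 4*a := by linarith
  subst hs
  have hta : 48*(a*t) = 918*a^2 - 5 := by linarith [h2, ht]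
  have haub : a < 0.162 := by nlinarith [hta, htub, ha, mul_pos ha ha]
  have hta2 : 48*(a^3*t) = 918*a^4 - 5*a^2 := by linear_combination a^2 * hta
  have ha2 : a^2 < 0.026244 := by nlinarith [haub, ha]
  have ha4 : a^4 < 0.026244 * a^2 := by nlinarith [ha2, sq_nonneg a, mul_pos ha ha]
  rw [gt_iff_lt, sub_pos, lt_div_iff₀ htpos]
  nlinarith [hta, hta2, ha4, ht, mul_pos ha ha]
end
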